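/- arXiv:1603.00525 — 2 statements merged into one kernel-verified Lean document; each statement's English description precedes it below -/
import Mathlib

section
/- Lebesgue density theorem for Bernoulli measures on Cantor space: if A ⊆ 2^ω is Borel and p ∈ (0,1), then for μ_p-almost every x ∈ A, the density lim_{n→∞} μ_p(A ∩ [x↾n]) / μ_p([x↾n]) equals 1. -/
open MeasureTheory

/-- Pullback of `f : ℕ → ℕ`: `(pullback f A) n = A (f n)`. -/
def pullback {α : Type*} (f : ℕ → ℕ) (A : ℕ → α) : ℕ → α := fun n => A (f n)

/-- The cylinder of sequences extending the finite string `σ`. -/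
def cyl (σ : List Bool) : Set (ℕ → Bool) :=
  {X | ∀ i : Fin σ.length, X i = σ.get i}

/-- The cylinder determined by the first `n` values of `x`. -/
def cylOf (x : ℕ → Bool) (n : ℕ) : Set (ℕ → Bool) :=
  cyl (List.ofFn fun i : Fin n => x i)

/-- `μ` is the Bernoulli product measure on `2^ω` with parameter `p`. -/
def IsBernoulli (p : ℝ) (μ : Measure (ℕ → Bool)) : Prop :=
  IsProbabilityMeasure μ ∧
    ∀ σ : List Bool,
      μ (cyl σ) = ENNReal.ofReal p ^ (σ.count true) *
        ENNReal.ofReal (1 - p) ^ (σ.count false)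

/-- Codes for oracle partial recursive functions. -/
inductive OCode : Type
  | oracle : OCode
  | zero : OCode
  | succ : OCode
  | left : OCode
  | right : OCode
  | pair : OCode → OCode → OCode
  | comp : OCode → OCode → OCode
  | prec : OCode → OCode → OCode
  | rfind' : OCode → OCode

/-- Evaluation of oracle codes relative to the oracle `O`. -/
def evalo (O : ℕ →. ℕ) : OCode → ℕ →. ℕ
  | .oracle => O
  | .zero => pure 0
  | .succ => Nat.succ
  | .left => ↑fun n : ℕ => n.unpair.1
  | .right => ↑fun n : ℕ => n.unpair.2
  | .pair cf cg => fun n => Nat.pair <$> evalo O cf n <*> evalo O cg n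
  | .comp cf cg => fun n => evalo O cg n >>= evalo O cf
  | .prec cf cg =>
    Nat.unpaired fun a n =>
      n.rec (evalo O cf a) fun y IH => do
        let i ← IH
        evalo O cg (Nat.pair a (Nat.pair y i))
  | .rfind' cf =>
    Nat.unpaired fun a m =>
      (Nat.rfind fun n => (fun m => m = 0) <$> evalo O cf (Nat.pair a (n + m))).map (· + m)

/-- A set `B ∈ 2^ω` viewed as a (total) oracle. -/
def oracleOf (B : ℕ → Bool) : ℕ →. ℕ := fun n => Part.some (B n).toNat

/-- Turing reducibility `A ≤_T B` on Cantor space. -/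
def TLe (A B : ℕ → Bool) : Prop :=
  ∃ c : OCode, ∀ n, evalo (oracleOf B) c n = Part.some (A n).toNat

/-- Turing equivalence on Cantor space. -/
def TEquiv (A B : ℕ → Bool) : Prop := TLe A B ∧ TLe B A

/-- Turing reducibility of `A ∈ 2^ω` to an oracle in `ω^ω`. -/
def TLe' (A : ℕ → Bool) (B : ℕ → ℕ) : Prop :=
  ∃ c : OCode, ∀ n, evalo (fun k => Part.some (B k)) c n = Part.some (A n).toNat

/-- `W c X`: the c.e. set with oracle code `c` relative to the oracle `X`. -/
def W (c : OCode) (X : ℕ → Bool) : Set ℕ := {n | (evalo (oracleOf X) c n).Dom}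

/-- A Martin-Löf test relative to oracle `O` for the measure `μ`. -/
def MLTest (O : ℕ →. ℕ) (μ : Measure (ℕ → Bool)) (U : ℕ → Set (ℕ → Bool)) : Prop :=
  (∃ c : OCode, ∀ n, U n =
      ⋃ σ ∈ {σ : List Bool | (evalo O c (Nat.pair n (Encodable.encode σ))).Dom}, cyl σ) ∧
    ∀ n, μ (U n) ≤ 2⁻¹ ^ n

/-- Martin-Löf randomness relative to the oracle `O` and measure `μ`. -/
def MLRandom (O : ℕ →. ℕ) (μ : Measure (ℕ → Bool)) (X : ℕ → Bool) : Prop :=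
  ∀ U : ℕ → Set (ℕ → Bool), MLTest O μ U → X ∉ ⋂ n, U n

/-- The real parameter coded by `p ∈ 2^ω` via binary expansion. -/
noncomputable def realOf (p : ℕ → Bool) : ℝ :=
  ∑' n, if p n then (2 : ℝ)⁻¹ ^ (n + 1) else 0

/-- A permutation of `ℕ`, coded as an oracle. -/
def oracleOfFn (f : ℕ → ℕ) : ℕ →. ℕ := fun n => Part.some (f n)

/-- The effective join of `X ∈ 2^ω` and `f ∈ ω^ω`. -/
def join (X : ℕ → Bool) (f : ℕ → ℕ) : ℕ → ℕ :=
  fun k => if k % 2 = 0 then (X (k / 2)).toNat else f (k / 2)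

/-!
With the ultrametric `dist x y = (1 / 2) ^ (first index where x and y differ)` on `2^ω`, closed
balls are exactly the cylinders `[x↾n]`. Passing from `[x↾n]` to `[x↾(n+1)]` multiplies the
Bernoulli measure by `p` or `1 - p`, both bounded below by `min p (1 - p) > 0`, so `μ_p` is a
doubling measure, and Lebesgue's density theorem for doubling measures on second countable
metric spaces applies along the balls of radius `(1 / 2) ^ n`.
-/

open Filter Topology Metric
open scoped NNReal ENNReal

theorem exists_pow_succ_le_lt_of_lt_one {K : Type*} [Semifield K] [LinearOrder K]
    [IsStrictOrderedRing K] [Archimedean K] [ExistsAddOfLE K] {x y : K}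
    (hx₀ : 0 < x) (hx₁ : x < 1) (hy : y < 1) :
    ∃ n : ℕ, y ^ (n + 1) ≤ x ∧ x < y ^ n := by
  classical
  have hex : ∃ k : ℕ, y ^ k ≤ x := (exists_pow_lt_of_lt_one hx₀ hy).imp fun _ => le_of_lt
  obtain ⟨n, hn⟩ : ∃ n, Nat.find hex = n + 1 := Nat.exists_eq_succ_of_ne_zero fun h => by
    have := Nat.find_spec hex
    rw [h, pow_zero] at this
    exact hx₁.not_ge this
  exact ⟨n, hn ▸ Nat.find_spec hex, not_le.1 (Nat.find_min hex (by omega))⟩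

namespace PiNat
variable {E : ℕ → Type*} [∀ n, TopologicalSpace (E n)] [∀ n, DiscreteTopology (E n)]

section Metric

attribute [local instance] PiNat.metricSpace

theorem closedBall_half_pow_eq_cylinder (x : ∀ n, E n) (n : ℕ) :
    closedBall x ((1 / 2 : ℝ) ^ n) = cylinder x n := by
  ext y
  exact mem_cylinder_iff_dist_le.symm

/-- Nonzero distances are powers of `1 / 2`, so below `2 * (1 / 2) ^ n` they are at most
`(1 / 2) ^ n`. -/
theorem closedBall_subset_cylinder {x : ∀ n, E n} {n : ℕ} {r : ℝ} (hr : r < 2 * (1 / 2) ^ n) :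
    closedBall x r ⊆ cylinder x n := by
  intro y hy
  rcases eq_or_ne y x with rfl | hne
  · exact self_mem_cylinder y n
  rw [mem_closedBall, dist_eq_of_ne hne] at hy
  have : (1 / 2 : ℝ) ^ (firstDiff y x + 1) < (1 / 2) ^ n := by rw [pow_succ]; linarith
  exact (mem_cylinder_iff_le_firstDiff hne n).2 (Nat.lt_succ_iff.1
    ((pow_lt_pow_iff_right_of_lt_one₀ (by norm_num) (by norm_num)).1 this))

theorem isUnifLocDoublingMeasure_of_measure_cylinder_le [MeasurableSpace (∀ n, E n)]
    (μ : Measure (∀ n, E n)) (C : ℝ≥0)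
    (hC : ∀ x n, μ (cylinder x n) ≤ C * μ (cylinder x (n + 1))) :
    IsUnifLocDoublingMeasure μ := by
  refine ⟨C, ?_⟩
  filter_upwards [Ioo_mem_nhdsGT (one_pos : (0 : ℝ) < 1)] with ε ⟨hε₀, hε₁⟩ x
  obtain ⟨n, hn, hn'⟩ :=
    exists_pow_succ_le_lt_of_lt_one hε₀ hε₁ (by norm_num : (1 / 2 : ℝ) < 1)
  calc μ (closedBall x (2 * ε)) ≤ μ (cylinder x n) :=
        measure_mono (closedBall_subset_cylinder (by linarith))
    _ ≤ C * μ (cylinder x (n + 1)) := hC x n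
    _ ≤ C * μ (closedBall x ε) := by
        rw [← closedBall_half_pow_eq_cylinder]
        gcongr

end Metric

theorem ae_tendsto_measure_inter_cylinder_div [∀ n, Countable (E n)]
    [∀ n, MeasurableSpace (E n)] [∀ n, BorelSpace (E n)] (μ : Measure (∀ n, E n))
    [IsLocallyFiniteMeasure μ] (C : ℝ≥0)
    (hC : ∀ x n, μ (cylinder x n) ≤ C * μ (cylinder x (n + 1))) (s : Set (∀ n, E n)) :
    ∀ᵐ x ∂μ.restrict s,
      Tendsto (fun n => μ (s ∩ cylinder x n) / μ (cylinder x n)) atTop (𝓝 1) := by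
  let := PiNat.metricSpace (E := E)
  have := isUnifLocDoublingMeasure_of_measure_cylinder_le μ C hC
  filter_upwards [IsUnifLocDoublingMeasure.ae_tendsto_measure_inter_div μ s 1] with x hx
  simpa only [closedBall_half_pow_eq_cylinder] using hx (fun _ => x) _
    (tendsto_pow_atTop_nhdsWithin_zero_of_lt_one (by norm_num : (0 : ℝ) < 1 / 2) (by norm_num))
    (Eventually.of_forall fun n => by simp)

end PiNat

theorem cylOf_eq_cylinder (x : ℕ → Bool) (n : ℕ) : cylOf x n = PiNat.cylinder x n := by
  ext y
  simp [cylOf, cyl, PiNat.mem_cylinder_iff, Fin.forall_iff]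

namespace IsBernoulli

variable {p : ℝ} {μ : Measure (ℕ → Bool)}

theorem measure_cylOf_succ (hμ : IsBernoulli p μ) (x : ℕ → Bool) (n : ℕ) :
    μ (cylOf x (n + 1)) = μ (cylOf x n) * ENNReal.ofReal (if x n then p else 1 - p) := by
  have hlist : (List.ofFn fun i : Fin (n + 1) => x i) = (List.ofFn fun i : Fin n => x i) ++ [x n] :=
    List.ofFn_succ_last ..
  rw [cylOf, cylOf, hμ.2, hμ.2, hlist]
  cases x n <;> simp [List.count_append, pow_succ] <;> ring

theorem measure_cylinder_le_mul (hμ : IsBernoulli p μ) (hp : p ∈ Set.Ioo 0 1)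
    (x : ℕ → Bool) (n : ℕ) :
    μ (PiNat.cylinder x n) ≤
      ((min p (1 - p)).toNNReal⁻¹ : ℝ≥0) * μ (PiNat.cylinder x (n + 1)) := by
  have hm : 0 < min p (1 - p) := lt_min hp.1 (sub_pos.2 hp.2)
  have hratio : 1 ≤ (ENNReal.ofReal (min p (1 - p)))⁻¹ *
      ENNReal.ofReal (if x n then p else 1 - p) :=
    calc (1 : ℝ≥0∞)
        = (ENNReal.ofReal (min p (1 - p)))⁻¹ * ENNReal.ofReal (min p (1 - p)) :=
          (ENNReal.inv_mul_cancel (by simpa using hm) ENNReal.ofReal_ne_top).symm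
      _ ≤ _ := by
          gcongr
          split_ifs
          exacts [min_le_left _ _, min_le_right _ _]
  rw [← cylOf_eq_cylinder, ← cylOf_eq_cylinder, hμ.measure_cylOf_succ, mul_comm (μ _),
    ← mul_assoc, ENNReal.coe_inv (Real.toNNReal_pos.2 hm).ne']
  exact le_mul_of_one_le_left zero_le hratio

end IsBernoulli

theorem lebesgue_density_general (p : ℝ) (hp : p ∈ Set.Ioo (0 : ℝ) 1)
    (μ : Measure (ℕ → Bool)) (hμ : IsBernoulli p μ)
    (A : Set (ℕ → Bool)) :
    ∀ᵐ x ∂μ, x ∈ A →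
      Filter.Tendsto (fun n => μ (A ∩ cylOf x n) / μ (cylOf x n))
        Filter.atTop (nhds 1) := by
  have := hμ.1
  filter_upwards [ae_imp_of_ae_restrict (PiNat.ae_tendsto_measure_inter_cylinder_div μ _
    (hμ.measure_cylinder_le_mul hp) A)] with x hx hxA
  simpa only [cylOf_eq_cylinder] using hx hxA

/-- Lebesgue density theorem for Bernoulli measures on Cantor
space. -/
theorem lebesgue_density (p : ℝ) (hp : p ∈ Set.Ioo (0 : ℝ) 1)
    (μ : Measure (ℕ → Bool)) (hμ : IsBernoulli p μ)
    (A : Set (ℕ → Bool)) (hA : MeasurableSet A) :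
    ∀ᵐ x ∂μ, x ∈ A →
      Filter.Tendsto (fun n => μ (A ∩ cylOf x n) / μ (cylOf x n))
        Filter.atTop (nhds 1) :=
  lebesgue_density_general p hp μ hμ A
end

section
/- Let f be a permutation of ω with pullback F = f*. If the set of G ∈ 2^ω with F(G) ≤_T G has positive Lebesgue measure, then f is computable. -/
open MeasureTheory

/-!
Since there are only countably many oracle codes, a single code `c` computes `pullback f G` from
`G` for all `G` in a set `S` of positive measure, and approximating `S` by finite unions of
cylinders yields a cylinder `cyl σ` in which `S` has relative measure at least `6/7`. If
`f n ≥ σ.length`, the set of `G ∈ cyl σ` with `Φ_c^G(n) = G m` has relative measure at least `6/7`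
for `m = f n`, but at most `1/2 + 1/7 < 2/3` for `m ≠ f n`: on `S` it forces `G m = G (f n)`, an
event of relative measure `1/2`. These measures can be approximated from below effectively, so
`f n` is found by searching for an `m` whose measure is seen to exceed `2/3` of the cylinder; the
finitely many `n` with `f n < σ.length` are read off a table.
-/

open Filter Topology Encodable
open scoped ENNReal
open Nat.Partrec (Code)

theorem Nat.rfind_mono {p q : ℕ →. Bool} (h : ∀ n, p n ≤ q n) : Nat.rfind p ≤ Nat.rfind q :=
  fun x hx => Nat.mem_rfind.2 ⟨h x _ (Nat.rfind_spec hx), fun hm => h _ _ (Nat.rfind_min hx hm)⟩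

theorem List.lookup_map_graph {α β : Type*} [DecidableEq α] (f : α → β) (l : List α) (a : α) :
    (l.map fun k => (k, f k)).lookup a = if a ∈ l then some (f a) else none := by
  induction l with
  | nil => simp
  | cons k l ih =>
    by_cases hk : a = k
    · simp [hk]
    · simp only [List.map_cons, List.lookup, beq_false_of_ne hk, ih, List.mem_cons, hk, false_or]

theorem List.modify_injective {α : Type*} {f : α → α} (hf : f.Injective) (i : ℕ) :
    Function.Injective fun l : List α => l.modify i f := by
  intro l l' h
  ext1 j
  have := congrArg (·[j]?) h
  revert this
  simp only [List.getElem?_modify]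
  cases l[j]? <;> cases l'[j]? <;> split_ifs <;> simp [hf.eq_iff]

namespace OCode

def toNat : OCode → ℕ
  | oracle => Nat.pair 0 0
  | zero => Nat.pair 1 0
  | succ => Nat.pair 2 0
  | left => Nat.pair 3 0
  | right => Nat.pair 4 0
  | pair cf cg => Nat.pair 5 (Nat.pair cf.toNat cg.toNat)
  | comp cf cg => Nat.pair 6 (Nat.pair cf.toNat cg.toNat)
  | prec cf cg => Nat.pair 7 (Nat.pair cf.toNat cg.toNat)
  | rfind' cf => Nat.pair 8 cf.toNat

theorem toNat_injective : Function.Injective toNat := by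
  intro c d h
  induction c generalizing d <;> cases d <;> simp [toNat, Nat.pair_eq_pair] at h ⊢ <;> grind

instance : Countable OCode := toNat_injective.countable

theorem evalo_mono {O O' : ℕ →. ℕ} (h : ∀ i, O i ≤ O' i) (c : OCode) (n : ℕ) :
    evalo O c n ≤ evalo O' c n := by
  induction c generalizing n with
  | oracle => exact h n
  | zero | succ | left | right => exact le_rfl
  | pair cf cg hf hg =>
    intro x hx
    simp only [evalo, Seq.seq, Part.map_eq_map, Part.mem_bind_iff, Part.mem_map_iff] at hx ⊢
    obtain ⟨_, ⟨a, ha, rfl⟩, b, hb, rfl⟩ := hx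
    exact ⟨_, ⟨a, hf n a ha, rfl⟩, b, hg n b hb, rfl⟩
  | comp cf cg hf hg =>
    intro x hx
    obtain ⟨a, ha, hx⟩ := Part.mem_bind_iff.1 hx
    exact Part.mem_bind_iff.2 ⟨a, hg n a ha, hf a x hx⟩
  | prec cf cg hf hg =>
    simp only [evalo, Nat.unpaired]
    induction n.unpair.2 with
    | zero => exact hf _
    | succ y ih =>
      intro x hx
      obtain ⟨i, hi, hx⟩ := Part.mem_bind_iff.1 hx
      exact Part.mem_bind_iff.2 ⟨i, ih i hi, hg _ x hx⟩
  | rfind' cf hf =>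
    intro x hx
    simp only [evalo, Nat.unpaired, Part.mem_map_iff] at hx ⊢
    obtain ⟨y, hy, rfl⟩ := hx
    refine ⟨y, Nat.rfind_mono (fun k b hb => ?_) y hy, rfl⟩
    obtain ⟨v, hv, rfl⟩ := (Part.mem_map_iff _).1 hb
    exact (Part.mem_map_iff _).2 ⟨v, hf _ v hv, rfl⟩

/-- The use principle: a halting computation queries only finitely many values of the oracle. -/
theorem eventually_mem_evalo {ι : Type*} {l : Filter ι} {O : ι → ℕ →. ℕ} {O' : ℕ →. ℕ}
    (hO : ∀ i x, x ∈ O' i → ∀ᶠ s in l, x ∈ O s i) (c : OCode) {n x : ℕ}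
    (hx : x ∈ evalo O' c n) : ∀ᶠ s in l, x ∈ evalo (O s) c n := by
  induction c generalizing n x with
  | oracle => exact hO n x hx
  | zero | succ | left | right => exact .of_forall fun _ => hx
  | pair cf cg hf hg =>
    simp only [evalo, Seq.seq, Part.map_eq_map, Part.mem_bind_iff, Part.mem_map_iff] at hx ⊢
    obtain ⟨_, ⟨a, ha, rfl⟩, b, hb, rfl⟩ := hx
    filter_upwards [hf ha, hg hb] with s has hbs
    exact ⟨_, ⟨a, has, rfl⟩, b, hbs, rfl⟩
  | comp cf cg hf hg =>
    obtain ⟨a, ha, hx⟩ := Part.mem_bind_iff.1 hx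
    filter_upwards [hg ha, hf hx] with s has hxs
    exact Part.mem_bind_iff.2 ⟨a, has, hxs⟩
  | prec cf cg hf hg =>
    simp only [evalo, Nat.unpaired] at hx ⊢
    generalize n.unpair.2 = y at hx ⊢
    induction y generalizing x with
    | zero => exact hf hx
    | succ y ih =>
      obtain ⟨i, hi, hx⟩ := Part.mem_bind_iff.1 hx
      filter_upwards [ih hi, hg hx] with s his hxs
      exact Part.mem_bind_iff.2 ⟨i, his, hxs⟩
  | rfind' cf hf =>
    simp only [evalo, Nat.unpaired, Part.mem_map_iff] at hx ⊢
    obtain ⟨y, hy, rfl⟩ := hx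
    have htest : ∀ k b, b ∈ (fun m => decide (m = 0)) <$>
        evalo O' cf (Nat.pair n.unpair.1 (k + n.unpair.2)) →
        ∀ᶠ s in l, b ∈ (fun m => decide (m = 0)) <$>
          evalo (O s) cf (Nat.pair n.unpair.1 (k + n.unpair.2)) := by
      intro k b hb
      obtain ⟨v, hv, rfl⟩ := (Part.mem_map_iff _).1 hb
      filter_upwards [hf hv] with s hvs
      exact (Part.mem_map_iff _).2 ⟨v, hvs, rfl⟩
    have hmin : ∀ᶠ s in l, ∀ k ∈ Finset.range y, false ∈ (fun m => decide (m = 0)) <$>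
        evalo (O s) cf (Nat.pair n.unpair.1 (k + n.unpair.2)) :=
      (Filter.eventually_all_finset _).2 fun k hk =>
        htest k false (Nat.rfind_min hy (Finset.mem_range.1 hk))
    filter_upwards [htest y true (Nat.rfind_spec hy), hmin] with s hspec hmins
    exact ⟨y, Nat.mem_rfind.2 ⟨hspec, fun hk => hmins _ (Finset.mem_range.2 hk)⟩, rfl⟩

open Computable in
theorem partrec_evalo {α : Type*} [Primcodable α] {O : α → ℕ →. ℕ} (hO : Partrec₂ O)
    (c : OCode) : Partrec₂ fun a => evalo (O a) c := by
  induction c with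
  | oracle => exact hO
  | zero => exact (const 0).partrec
  | succ => exact (Computable.succ.comp snd).partrec
  | left => exact (fst.comp (unpair.comp snd)).partrec
  | right => exact (snd.comp (unpair.comp snd)).partrec
  | pair cf cg hf hg =>
    refine (hf.bind ((hg.comp (fst.comp fst) (snd.comp fst)).map
      (Primrec₂.natPair.to_comp.comp (snd.comp fst) snd).to₂).to₂).of_eq fun p => ?_
    simp [evalo, Seq.seq]
  | comp cf cg hf hg => exact hg.bind (hf.comp (fst.comp fst) snd).to₂
  | prec cf cg hf hg =>
    exact Partrec.nat_rec (snd.comp (unpair.comp snd))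
      (hf.comp fst (fst.comp (unpair.comp snd)))
      (hg.comp (fst.comp fst) (Primrec₂.natPair.to_comp.comp
        (fst.comp (unpair.comp (snd.comp fst))) (Primrec₂.natPair.to_comp.comp
          (fst.comp snd) (snd.comp snd)))).to₂
  | rfind' cf hf =>
    refine Partrec.map (Partrec.rfind ((hf.comp (fst.comp fst) (Primrec₂.natPair.to_comp.comp
      (fst.comp (unpair.comp (snd.comp fst)))
      (Primrec.nat_add.to_comp.comp snd (snd.comp (unpair.comp (snd.comp fst)))))).map
        (Primrec.eq.comp Primrec.snd (Primrec.const 0)).decide.to_comp.to₂).to₂)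
      (Primrec.nat_add.to_comp.comp snd (snd.comp (unpair.comp (snd.comp fst)))).to₂

end OCode

def prefixOf (G : ℕ → Bool) (L : ℕ) : List Bool := (List.range L).map G

/-- Undefined beyond the length of `σ`, so that a halting computation has only queried `σ`. -/
def stringOracle (σ : List Bool) : ℕ →. ℕ := fun i => Part.ofOption (σ[i]?.map Bool.toNat)

@[simp] theorem length_prefixOf (G : ℕ → Bool) (L : ℕ) : (prefixOf G L).length = L := by
  simp [prefixOf]

theorem take_prefixOf (G : ℕ → Bool) {s L : ℕ} (h : s ≤ L) :
    (prefixOf G L).take s = prefixOf G s := by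
  simp [prefixOf, ← List.map_take, List.take_range, min_eq_left h]

theorem getD_prefixOf (G : ℕ → Bool) {m L : ℕ} (h : m < L) (b : Bool) :
    (prefixOf G L).getD m b = G m := by
  simp [prefixOf, List.getD_eq_getElem?_getD, h]

theorem mem_cyl_iff {G : ℕ → Bool} {σ : List Bool} : G ∈ cyl σ ↔ prefixOf G σ.length = σ := by
  simp only [cyl, Set.mem_ofPred_eq, List.ext_get_iff, length_prefixOf, true_and]
  exact ⟨fun h i hi _ => by simpa [prefixOf] using h ⟨i, hi⟩,
    fun h i => by simpa [prefixOf] using h i i.2 (by simp)⟩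

theorem mem_cyl_iff_take_prefixOf {G : ℕ → Bool} {σ : List Bool} {L : ℕ} (h : σ.length ≤ L) :
    G ∈ cyl σ ↔ (prefixOf G L).take σ.length = σ := by
  rw [mem_cyl_iff, take_prefixOf G h]

theorem stringOracle_le_oracleOf {G : ℕ → Bool} {σ : List Bool} (hG : G ∈ cyl σ) (i : ℕ) :
    stringOracle σ i ≤ oracleOf G i := by
  intro x hx
  rw [← mem_cyl_iff.1 hG] at hx
  by_cases hi : i < σ.length <;> simp_all [stringOracle, oracleOf, prefixOf]

theorem eventually_mem_stringOracle_prefixOf (G : ℕ → Bool) {i x : ℕ} (hx : x ∈ oracleOf G i) :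
    ∀ᶠ L in atTop, x ∈ stringOracle (prefixOf G L) i := by
  filter_upwards [eventually_gt_atTop i] with L hL
  simp_all [stringOracle, oracleOf, prefixOf]

theorem partrec_stringOracle : Partrec₂ stringOracle :=
  (Primrec.option_map Primrec.list_getElem? ((Primrec.dom_bool Bool.toNat).comp Primrec.snd).to₂
    ).to_comp.ofOption

def strings : ℕ → List (List Bool)
  | 0 => [[]]
  | L + 1 => (strings L).flatMap fun σ => [false :: σ, true :: σ]

theorem mem_strings {L : ℕ} {σ : List Bool} : σ ∈ strings L ↔ σ.length = L := by
  induction L generalizing σ with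
  | zero => simp [strings]
  | succ L ih =>
    cases σ with
    | nil => simp [strings]
    | cons b τ => cases b <;> simp [strings, ih]

theorem nodup_strings (L : ℕ) : (strings L).Nodup := by
  induction L with
  | zero => simp [strings]
  | succ L ih =>
    refine List.nodup_flatMap.2 ⟨fun _ _ => by simp, ih.imp fun hne => ?_⟩
    simpa [Function.onFun] using hne.symm

theorem primrec_strings : Primrec strings :=
  (Primrec.nat_rec₁ [[]] (Primrec.list_flatMap Primrec.snd
    (Primrec.list_cons.comp (Primrec.list_cons.comp (Primrec.const false) Primrec.snd)
      (Primrec.list_cons.comp (Primrec.list_cons.comp (Primrec.const true) Primrec.snd)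
        (Primrec.const []))).to₂).to₂).of_eq fun L => by
    induction L with
    | zero => rfl
    | succ L ih => simp [strings, ← ih]

theorem measurableSet_cyl (σ : List Bool) : MeasurableSet (cyl σ) := by
  simp only [cyl, Set.ofPred_forall]
  exact .iInter fun i => measurableSet_eq_fun (measurable_pi_apply _) measurable_const

theorem measure_cyl {μ : Measure (ℕ → Bool)} (hμ : IsBernoulli 2⁻¹ μ) (σ : List Bool) :
    μ (cyl σ) = 2⁻¹ ^ σ.length := by
  have half : ENNReal.ofReal 2⁻¹ = 2⁻¹ := by
    rw [ENNReal.ofReal_inv_of_pos two_pos, ENNReal.ofReal_ofNat]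
  rw [hμ.2, show (1 : ℝ) - 2⁻¹ = 2⁻¹ by norm_num, half, ← pow_add,
    List.count_true_add_count_false]

theorem measureReal_cyl {μ : Measure (ℕ → Bool)} (hμ : IsBernoulli 2⁻¹ μ) (σ : List Bool) :
    μ.real (cyl σ) = 2⁻¹ ^ σ.length := by
  simp [measureReal_def, measure_cyl hμ]

theorem pairwiseDisjoint_cyl (L : ℕ) : {σ : List Bool | σ.length = L}.PairwiseDisjoint cyl := by
  intro σ hσ τ hτ hne
  refine Set.disjoint_left.2 fun G hGσ hGτ => hne ?_
  rw [← mem_cyl_iff.1 hGσ, ← mem_cyl_iff.1 hGτ, hσ, hτ]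

section Prefix

variable (L : ℕ) (P : List Bool → Prop) [DecidablePred P]

theorem coe_filter_strings_subset :
    ↑((strings L).toFinset.filter P) ⊆ {σ : List Bool | σ.length = L} :=
  fun σ hσ => by simp_all [mem_strings]

theorem setOf_prefixOf_eq_biUnion :
    {G | P (prefixOf G L)} = ⋃ σ ∈ (strings L).toFinset.filter P, cyl σ := by
  ext G
  simp only [Set.mem_ofPred_eq, Set.mem_iUnion, Finset.mem_filter, List.mem_toFinset, mem_strings,
    exists_prop]
  refine ⟨fun h => ⟨_, ⟨length_prefixOf G L, h⟩, mem_cyl_iff.2 (by simp)⟩, ?_⟩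
  rintro ⟨σ, ⟨rfl, hσ⟩, hG⟩
  rwa [mem_cyl_iff.1 hG]

theorem measure_setOf_prefixOf {μ : Measure (ℕ → Bool)} (hμ : IsBernoulli 2⁻¹ μ) :
    μ {G | P (prefixOf G L)} = ((strings L).toFinset.filter P).card * 2⁻¹ ^ L := by
  rw [setOf_prefixOf_eq_biUnion, measure_biUnion_finset
    ((pairwiseDisjoint_cyl L).subset (coe_filter_strings_subset L P))
    fun σ _ => measurableSet_cyl σ, ← nsmul_eq_mul, ← Finset.sum_const]
  exact Finset.sum_congr rfl fun σ hσ => by rw [measure_cyl hμ, coe_filter_strings_subset L P hσ]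

theorem length_filter_strings :
    ((strings L).filter P).length = ((strings L).toFinset.filter P).card := by
  rw [← List.toFinset_card_of_nodup ((nodup_strings L).filter _), List.toFinset_filter]
  simp

end Prefix

theorem measurableSet_setOf_prefixOf (L : ℕ) (P : List Bool → Prop) :
    MeasurableSet {G | P (prefixOf G L)} := by
  classical
  rw [setOf_prefixOf_eq_biUnion]
  exact Finset.measurableSet_biUnion _ fun σ _ => measurableSet_cyl σ

theorem exists_measure_symmDiff_setOf_prefixOf_lt (μ : Measure (ℕ → Bool)) [IsFiniteMeasure μ]
    {E : Set (ℕ → Bool)} (hE : MeasurableSet E) {δ : ℝ≥0∞} (hδ : δ ≠ 0) :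
    ∃ (L : ℕ) (P : List Bool → Prop), μ (symmDiff E {G | P (prefixOf G L)}) < δ := by
  obtain ⟨r, -, hr0, hrδ⟩ := ENNReal.lt_iff_exists_real_btwn.1 (pos_iff_ne_zero.2 hδ)
  obtain ⟨t, ht, hEt⟩ := (Measure.MeasureDense.of_generateFrom_isSetAlgebra_finite μ
    isSetAlgebra_measurableCylinders generateFrom_measurableCylinders.symm).approx E hE
    (measure_ne_top μ E) r (ENNReal.ofReal_pos.1 hr0)
  obtain ⟨I, S, -, rfl⟩ := (mem_measurableCylinders t).1 ht
  refine ⟨I.sup id + 1, fun σ => (fun i => σ.getD i false) ∈ cylinder I S, ?_⟩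
  convert hEt.trans hrδ using 4
  ext G
  simp only [Set.mem_ofPred_eq, mem_cylinder]
  congr! 1
  ext ⟨i, hi⟩
  exact getD_prefixOf G (Nat.lt_succ_of_le (Finset.le_sup (f := id) hi)) false

theorem exists_cyl_measure_sdiff_le {μ : Measure (ℕ → Bool)} (hμ : IsBernoulli 2⁻¹ μ)
    {E : Set (ℕ → Bool)} (hE : MeasurableSet E) (hE0 : μ E ≠ 0) {ε : ℝ≥0∞} (hε : ε ≠ 0) :
    ∃ σ, μ (cyl σ \ E) ≤ ε * μ (cyl σ) := by
  classical
  have := hμ.1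
  rcases eq_or_ne ε ⊤ with rfl | hεtop
  · exact ⟨[], by simp [measure_cyl hμ]⟩
  by_contra! h
  obtain ⟨δ, hδ0, hδ⟩ := ENNReal.exists_pos_mul_lt (a := 1 + ε) (b := ε * μ E)
    (by simp [hεtop]) (mul_ne_zero hε hE0)
  obtain ⟨L, P, hLP⟩ := exists_measure_symmDiff_setOf_prefixOf_lt μ hE hδ0.ne'
  rw [setOf_prefixOf_eq_biUnion] at hLP
  set t := ⋃ σ ∈ (strings L).toFinset.filter P, cyl σ
  have ht : ε * μ t ≤ μ (t \ E) := by
    have hdisj := (pairwiseDisjoint_cyl L).subset (coe_filter_strings_subset L P)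
    simp only [t, Set.iUnion_sdiff]
    rw [measure_biUnion_finset hdisj fun σ _ => measurableSet_cyl σ, measure_biUnion_finset
      (hdisj.mono fun σ => Set.sdiff_subset) fun σ _ => (measurableSet_cyl σ).diff hE,
      Finset.mul_sum]
    exact Finset.sum_le_sum fun σ _ => (h σ).le
  refine (not_lt.2 ?_) hδ
  calc ε * μ E ≤ ε * (μ t + μ (E \ t)) := by
        gcongr
        exact (measure_le_inter_add_sdiff μ E t).trans (by gcongr; exact Set.inter_subset_right)
    _ ≤ μ (t \ E) + ε * μ (E \ t) := by rw [mul_add]; gcongr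
    _ ≤ μ (symmDiff E t) + ε * μ (symmDiff E t) := by
        gcongr <;> intro G hG <;> simp_all [symmDiff]
    _ ≤ δ * (1 + ε) := by rw [mul_comm δ, add_mul, one_mul]; gcongr

theorem exists_cyl_measureReal_sdiff_le {μ : Measure (ℕ → Bool)} (hμ : IsBernoulli 2⁻¹ μ)
    {E : Set (ℕ → Bool)} (hE : MeasurableSet E) (hE0 : μ E ≠ 0) {ε : ℝ} (hε : 0 < ε) :
    ∃ σ, μ.real (cyl σ \ E) ≤ ε * μ.real (cyl σ) := by
  have := hμ.1
  obtain ⟨σ, hσ⟩ := exists_cyl_measure_sdiff_le hμ hE hE0 (ENNReal.ofReal_pos.2 hε).ne'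
  refine ⟨σ, ?_⟩
  simpa [measureReal_def, ENNReal.toReal_mul, hε.le] using
    ENNReal.toReal_mono (by finiteness) hσ

/-- Flipping bit `m'` maps the strings on which bits `m` and `m'` agree injectively to those on
which they differ. -/
theorem two_mul_card_filter_getD_eq_le {s : Finset (List Bool)} {m m' : ℕ} (hne : m ≠ m')
    (hs : ∀ τ ∈ s, m' < τ.length ∧ τ.modify m' not ∈ s) :
    2 * (s.filter fun τ => τ.getD m false = τ.getD m' false).card ≤ s.card := by
  have hflip : (s.filter fun τ => τ.getD m false = τ.getD m' false).card ≤
      (s.filter fun τ => ¬τ.getD m false = τ.getD m' false).card := by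
    refine Finset.card_le_card_of_injOn (fun τ => τ.modify m' not) (fun τ hτ => ?_)
      (List.modify_injective Bool.not_injective m').injOn
    simp only [Finset.coe_filter, Set.mem_ofPred_eq] at hτ ⊢
    refine ⟨(hs τ hτ.1).2, ?_⟩
    have := (hs τ hτ.1).1
    simp_all [List.getD_eq_getElem?_getD, Ne.symm hne]
  have hsplit := Finset.card_filter_add_card_filter_not (s := s)
    fun τ => τ.getD m false = τ.getD m' false
  omega

theorem two_mul_measure_inter_cyl_le {μ : Measure (ℕ → Bool)} (hμ : IsBernoulli 2⁻¹ μ)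
    {σ : List Bool} {m m' : ℕ} (hne : m ≠ m') (hm' : σ.length ≤ m') :
    2 * μ ({G | G m = G m'} ∩ cyl σ) ≤ μ (cyl σ) := by
  classical
  set L := max m m' + 1
  have hmL : m < L := by omega
  have hm'L : m' < L := by omega
  let R : List Bool → Prop := fun τ => τ.take σ.length = σ
  let same : List Bool → Prop := fun τ => τ.getD m false = τ.getD m' false
  have hA : {G | G m = G m'} ∩ cyl σ = {G | R (prefixOf G L) ∧ same (prefixOf G L)} := by
    ext G
    simp only [Set.mem_inter_iff, Set.mem_ofPred_eq, mem_cyl_iff_take_prefixOf (hm'.trans hm'L.le),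
      R, same, getD_prefixOf G hmL, getD_prefixOf G hm'L]
    exact and_comm
  have hC : cyl σ = {G | R (prefixOf G L)} := by
    ext G
    exact mem_cyl_iff_take_prefixOf (hm'.trans hm'L.le)
  have hμA := measure_setOf_prefixOf L (fun τ => R τ ∧ same τ) hμ
  rw [hA, hC, hμA, measure_setOf_prefixOf L R hμ, ← mul_assoc, ← Finset.filter_filter]
  gcongr
  norm_cast
  refine two_mul_card_filter_getD_eq_le hne fun τ hτ => ?_
  simp only [Finset.mem_filter, List.mem_toFinset, mem_strings, R] at hτ ⊢
  refine ⟨by omega, by simpa using hτ.1, ?_⟩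
  rw [List.take_modify, List.modify_eq_self (by simp; omega), hτ.2]

namespace OCode

theorem exists_code_eval_stringOracle (c : OCode) :
    ∃ e : Code, ∀ σ n, e.eval (encode (σ, n)) = evalo (stringOracle σ) c n := by
  have h : Partrec fun x : ℕ => (Part.ofOption (decode (α := List Bool × ℕ) x)).bind
      fun p => evalo (stringOracle p.1) c p.2 :=
    Computable.decode.ofOption.bind ((partrec_evalo partrec_stringOracle c).comp
      (Computable.fst.comp Computable.snd) (Computable.snd.comp Computable.snd)).to₂
  obtain ⟨e, he⟩ := Code.exists_code.1 (Partrec.nat_iff.1 h)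
  exact ⟨e, fun σ n => by simp [he]⟩

noncomputable def stringCode (c : OCode) : Code := c.exists_code_eval_stringOracle.choose

theorem eval_stringCode (c : OCode) (σ : List Bool) (n : ℕ) :
    c.stringCode.eval (encode (σ, n)) = evalo (stringOracle σ) c n :=
  c.exists_code_eval_stringOracle.choose_spec σ n

def StageAccepts (c : OCode) (n m N : ℕ) (τ : List Bool) : Prop :=
  m < τ.length ∧
    ∃ s ≤ τ.length, (τ.getD m false).toNat ∈ c.stringCode.evaln N (encode (τ.take s, n))

noncomputable instance (c : OCode) (n m N : ℕ) : DecidablePred (StageAccepts c n m N) :=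
  fun τ => by unfold StageAccepts; infer_instance

open Primrec in
theorem primrecPred_stageAccepts (c : OCode) :
    PrimrecPred fun x : (ℕ × ℕ × ℕ) × List Bool => c.StageAccepts x.1.1 x.1.2.1 x.1.2.2 x.2 := by
  have hn : Primrec fun x : (ℕ × ℕ × ℕ) × List Bool => x.1.1 := fst.comp fst
  have hm : Primrec fun x : (ℕ × ℕ × ℕ) × List Bool => x.1.2.1 := fst.comp (snd.comp fst)
  have hN : Primrec fun x : (ℕ × ℕ × ℕ) × List Bool => x.1.2.2 := snd.comp (snd.comp fst)
  have hev : Primrec fun y : ℕ × (ℕ × ℕ × ℕ) × List Bool =>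
      c.stringCode.evaln y.2.1.2.2 (encode (y.2.2.take y.1, y.2.1.1)) :=
    Code.primrec_evaln.comp (((hN.comp snd).pair (const c.stringCode)).pair
      (Primrec.encode.comp ((list_take.comp fst (snd.comp snd)).pair (hn.comp snd))))
  have hbit : Primrec fun y : ℕ × (ℕ × ℕ × ℕ) × List Bool => (y.2.2.getD y.2.1.2.1 false).toNat :=
    (dom_bool Bool.toNat).comp ((list_getD false).comp (snd.comp snd) (hm.comp snd))
  have hout : PrimrecRel fun (s : ℕ) (x : (ℕ × ℕ × ℕ) × List Bool) =>
      c.stringCode.evaln x.1.2.2 (encode (x.2.take s, x.1.1)) =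
        some (x.2.getD x.1.2.1 false).toNat :=
    Primrec.eq.comp hev (option_some.comp hbit)
  have hex := hout.exists_mem_list.comp
    (list_range.comp (Primrec.succ.comp (list_length.comp snd))) Primrec.id
  refine PrimrecPred.of_eq ((nat_lt.comp hm (list_length.comp snd)).and hex) fun x => ?_
  simp [StageAccepts, Option.mem_def]

/-- Allowing every prefix length `s ≤ N`, not just `N`, makes these sets increase with `N`. -/
def approxSet (c : OCode) (n m N : ℕ) : Set (ℕ → Bool) :=
  {G | StageAccepts c n m N (prefixOf G N)}

theorem mem_approxSet {c : OCode} {n m N : ℕ} {G : ℕ → Bool} :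
    G ∈ approxSet c n m N ↔
      m < N ∧ ∃ s ≤ N, (G m).toNat ∈ c.stringCode.evaln N (encode (prefixOf G s, n)) := by
  simp only [approxSet, StageAccepts, Set.mem_ofPred_eq, length_prefixOf]
  refine and_congr_right fun hm => exists_congr fun s => and_congr_right fun hs => ?_
  rw [getD_prefixOf G hm, take_prefixOf G hs]

theorem approxSet_subset (c : OCode) (n m N : ℕ) :
    approxSet c n m N ⊆ {G | evalo (oracleOf G) c n = Part.some (G m).toNat} := by
  intro G hG
  obtain ⟨-, s, -, hs⟩ := mem_approxSet.1 hG
  have hx := Code.evaln_sound hs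
  rw [eval_stringCode] at hx
  exact Part.eq_some_iff.2 <|
    evalo_mono (stringOracle_le_oracleOf (mem_cyl_iff.2 (by simp))) c n _ hx

theorem monotone_approxSet (c : OCode) (n m : ℕ) : Monotone (approxSet c n m) := by
  refine monotone_nat_of_le_succ fun N G hG => ?_
  obtain ⟨hm, s, hs, hx⟩ := mem_approxSet.1 hG
  exact mem_approxSet.2
    ⟨hm.trans N.lt_succ_self, s, hs.trans N.le_succ, Code.evaln_mono N.le_succ hx⟩

theorem eventually_mem_approxSet {c : OCode} {n m : ℕ} {G : ℕ → Bool}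
    (hG : evalo (oracleOf G) c n = Part.some (G m).toNat) :
    ∀ᶠ N in atTop, G ∈ approxSet c n m N := by
  have hx : (G m).toNat ∈ evalo (oracleOf G) c n := hG ▸ Part.mem_some _
  obtain ⟨s, hs⟩ := (eventually_mem_evalo
    (fun i x hx => eventually_mem_stringOracle_prefixOf G hx) c hx).exists
  rw [← eval_stringCode] at hs
  obtain ⟨k, hk⟩ := Code.evaln_complete.1 hs
  filter_upwards [eventually_ge_atTop (max (max s k) (m + 1))] with N hN
  exact mem_approxSet.2 ⟨by omega, s, by omega, Code.evaln_mono (by omega) hk⟩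

theorem setOf_evalo_eq_iUnion (c : OCode) (n m : ℕ) :
    {G | evalo (oracleOf G) c n = Part.some (G m).toNat} = ⋃ N, approxSet c n m N :=
  (Set.iUnion_subset (approxSet_subset c n m)).antisymm' fun _ hG =>
    Set.mem_iUnion.2 (eventually_mem_approxSet hG).exists

theorem measurableSet_setOf_evalo_eq (c : OCode) (n m : ℕ) :
    MeasurableSet {G | evalo (oracleOf G) c n = Part.some (G m).toNat} := by
  rw [setOf_evalo_eq_iUnion]
  exact .iUnion fun N => measurableSet_setOf_prefixOf N _

noncomputable def countAccepting (c : OCode) (σ : List Bool) (n m N : ℕ) : ℕ :=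
  ((strings N).filter fun τ => τ.take σ.length = σ ∧ c.StageAccepts n m N τ).length

theorem primrec_countAccepting (c : OCode) (σ : List Bool) :
    Primrec fun x : ℕ × ℕ × ℕ => c.countAccepting σ x.1 x.2.1 x.2.2 := by
  have hR : PrimrecRel fun (τ : List Bool) (x : ℕ × ℕ × ℕ) =>
      τ.take σ.length = σ ∧ c.StageAccepts x.1 x.2.1 x.2.2 τ :=
    (Primrec.eq.comp (Primrec.list_take.comp (Primrec.const σ.length) Primrec.fst)
      (Primrec.const σ)).and (c.primrecPred_stageAccepts.comp (Primrec.snd.pair Primrec.fst))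
  exact (Primrec.list_length.comp (hR.listFilter.comp
    (primrec_strings.comp (Primrec.snd.comp Primrec.snd)) Primrec.id)).of_eq fun x => rfl

theorem measureReal_cyl_inter_approxSet {μ : Measure (ℕ → Bool)} (hμ : IsBernoulli 2⁻¹ μ)
    (c : OCode) {σ : List Bool} (n m : ℕ) {N : ℕ} (hN : σ.length ≤ N) :
    μ.real (cyl σ ∩ c.approxSet n m N) = c.countAccepting σ n m N * 2⁻¹ ^ N := by
  classical
  have hset : cyl σ ∩ c.approxSet n m N =
      {G | (fun τ => τ.take σ.length = σ ∧ c.StageAccepts n m N τ) (prefixOf G N)} := by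
    ext G
    simp only [Set.mem_inter_iff, mem_cyl_iff_take_prefixOf hN, approxSet, Set.mem_ofPred_eq]
  rw [hset, measureReal_def, measure_setOf_prefixOf N
    (fun τ => τ.take σ.length = σ ∧ c.StageAccepts n m N τ) hμ, countAccepting,
    length_filter_strings]
  simp

/-- By stage `N`, more than two thirds of `cyl σ` is seen to output `G m` at `n`. -/
def Certifies (c : OCode) (σ : List Bool) (n m N : ℕ) : Prop :=
  σ.length ≤ N ∧ 2 * 2 ^ N < 3 * 2 ^ σ.length * c.countAccepting σ n m N

noncomputable instance (c : OCode) (σ : List Bool) (n m : ℕ) : DecidablePred (c.Certifies σ n m) :=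
  fun N => by unfold Certifies; infer_instance

theorem primrecPred_certifies (c : OCode) (σ : List Bool) :
    PrimrecPred fun x : ℕ × ℕ × ℕ => c.Certifies σ x.1 x.2.1 x.2.2 := by
  have hN : Primrec fun x : ℕ × ℕ × ℕ => x.2.2 := Primrec.snd.comp Primrec.snd
  have hpow : Primrec₂ ((· ^ ·) : ℕ → ℕ → ℕ) := Primrec₂.unpaired'.1 Nat.Primrec.pow
  exact (Primrec.nat_le.comp (Primrec.const _) hN).and (Primrec.nat_lt.comp
    (Primrec.nat_mul.comp (Primrec.const 2) (hpow.comp (Primrec.const 2) hN))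
    (Primrec.nat_mul.comp (Primrec.const _) (c.primrec_countAccepting σ)))

theorem certifies_iff {μ : Measure (ℕ → Bool)} (hμ : IsBernoulli 2⁻¹ μ) {c : OCode}
    {σ : List Bool} {n m N : ℕ} :
    c.Certifies σ n m N ↔
      σ.length ≤ N ∧ 2 * μ.real (cyl σ) < 3 * μ.real (cyl σ ∩ c.approxSet n m N) := by
  refine and_congr_right fun hN => ?_
  rw [measureReal_cyl hμ, c.measureReal_cyl_inter_approxSet hμ n m hN]
  have hpos : (0 : ℝ) < 2⁻¹ ^ σ.length * 2⁻¹ ^ N := by positivity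
  have e₁ : (2 : ℝ) * 2⁻¹ ^ σ.length = (2 * 2 ^ N : ℕ) * (2⁻¹ ^ σ.length * 2⁻¹ ^ N) := by
    push_cast; rw [inv_pow, inv_pow]; field_simp
  have e₂ : (3 : ℝ) * (c.countAccepting σ n m N * 2⁻¹ ^ N) =
      (3 * 2 ^ σ.length * c.countAccepting σ n m N : ℕ) * (2⁻¹ ^ σ.length * 2⁻¹ ^ N) := by
    push_cast; rw [inv_pow, inv_pow]; field_simp
  rw [e₁, e₂, mul_lt_mul_iff_of_pos_right hpos, Nat.cast_lt]

end OCode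

theorem Computable.of_mem_partrec_off_finset {f : ℕ → ℕ} {g : ℕ →. ℕ} (hg : Partrec g)
    (s : Finset ℕ) (h : ∀ n ∉ s, f n ∈ g n) : Computable f := by
  classical
  let table := s.toList.map fun k => (k, f k)
  have htable : Primrec fun n => table.lookup n :=
    Primrec.listLookup.comp Primrec.id (Primrec.const table)
  refine Partrec.of_eq_tot (Partrec.cond (Primrec.option_isSome.comp htable).to_comp
    ((Primrec.option_getD.comp htable (Primrec.const 0)).to_comp.partrec) hg) fun n => ?_
  by_cases hn : n ∈ s <;> simp [table, List.lookup_map_graph, hn, h n]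

theorem exists_partrec_mem_of_certified {R : ℕ → ℕ → ℕ → Prop} [∀ n m, DecidablePred (R n m)]
    (hR : PrimrecPred fun x : ℕ × ℕ × ℕ => R x.1 x.2.1 x.2.2) :
    ∃ g : ℕ →. ℕ, Partrec g ∧
      ∀ n b, (∃ N, R n b N) → (∀ m N, R n m N → m = b) → b ∈ g n := by
  refine ⟨fun n => Nat.rfindOpt fun k =>
      if R n k.unpair.1 k.unpair.2 then some k.unpair.1 else none,
    Partrec.rfindOpt ?_, fun n b hex huniq => ?_⟩
  · have hk₁ : Primrec fun x : ℕ × ℕ => x.2.unpair.1 := Primrec.fst.comp (Primrec.unpair.comp .snd)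
    have hk₂ : Primrec fun x : ℕ × ℕ => x.2.unpair.2 := Primrec.snd.comp (Primrec.unpair.comp .snd)
    exact (Primrec.ite (hR.comp (Primrec.fst.pair (hk₁.pair hk₂))) (Primrec.option_some.comp hk₁)
      (Primrec.const Option.none)).to_comp
  · obtain ⟨N, hN⟩ := hex
    have hdom : (Nat.rfindOpt fun k =>
        if R n k.unpair.1 k.unpair.2 then some k.unpair.1 else none).Dom :=
      Nat.rfindOpt_dom.2 ⟨Nat.pair b N, b, by simp [hN]⟩
    obtain ⟨k, hk⟩ := Nat.rfindOpt_spec (Part.get_mem hdom)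
    split_ifs at hk with hRk
    · rw [Option.mem_def, Option.some_inj] at hk
      rw [← huniq _ _ hRk, hk]
      exact Part.get_mem hdom
    · simp at hk

def reductionSet (f : ℕ → ℕ) (c : OCode) : Set (ℕ → Bool) :=
  {G | ∀ n, evalo (oracleOf G) c n = Part.some (G (f n)).toNat}

theorem setOf_TLe_pullback_eq_iUnion (f : ℕ → ℕ) :
    {G | TLe (pullback f G) G} = ⋃ c, reductionSet f c := by
  ext G
  simp [TLe, pullback, reductionSet]

theorem measurableSet_reductionSet (f : ℕ → ℕ) (c : OCode) :
    MeasurableSet (reductionSet f c) := by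
  simp only [reductionSet, Set.ofPred_forall]
  exact .iInter fun n => c.measurableSet_setOf_evalo_eq n (f n)

section Estimates

variable {μ : Measure (ℕ → Bool)} (hμ : IsBernoulli 2⁻¹ μ) {f : ℕ → ℕ} {c : OCode}
  {σ : List Bool} (hσ : μ.real (cyl σ \ reductionSet f c) ≤ 7⁻¹ * μ.real (cyl σ))
include hμ hσ

theorem eventually_lt_measureReal_approxSet (n : ℕ) :
    ∀ᶠ N in atTop, 2 * μ.real (cyl σ) < 3 * μ.real (cyl σ ∩ c.approxSet n (f n) N) := by
  have := hμ.1
  have hmono : Monotone fun N => cyl σ ∩ c.approxSet n (f n) N :=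
    fun _ _ h => Set.inter_subset_inter_right _ (c.monotone_approxSet n (f n) h)
  have hlim : Tendsto (fun N => μ.real (cyl σ ∩ c.approxSet n (f n) N)) atTop
      (𝓝 (μ.real (⋃ N, cyl σ ∩ c.approxSet n (f n) N))) :=
    (ENNReal.tendsto_toReal (measure_ne_top _ _)).comp (tendsto_measure_iUnion_atTop hmono)
  have hsub : cyl σ ∩ reductionSet f c ⊆ ⋃ N, cyl σ ∩ c.approxSet n (f n) N := by
    rw [← Set.inter_iUnion, ← c.setOf_evalo_eq_iUnion]
    exact Set.inter_subset_inter_right _ fun G hG => hG n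
  have hsplit := measureReal_inter_add_sdiff (μ := μ) (s := cyl σ)
    (measurableSet_reductionSet f c)
  have hcyl : 0 < μ.real (cyl σ) := by rw [measureReal_cyl hμ]; positivity
  have hlow : 2 / 3 * μ.real (cyl σ) < μ.real (⋃ N, cyl σ ∩ c.approxSet n (f n) N) := by
    linarith [measureReal_mono (μ := μ) hsub]
  filter_upwards [hlim.eventually (eventually_gt_nhds hlow)] with N hN
  linarith

theorem measureReal_approxSet_le {n m : ℕ} (hfn : σ.length ≤ f n) (hm : m ≠ f n) (N : ℕ) :
    3 * μ.real (cyl σ ∩ c.approxSet n m N) ≤ 2 * μ.real (cyl σ) := by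
  have := hμ.1
  have hsub : cyl σ ∩ c.approxSet n m N ⊆
      ({G | G m = G (f n)} ∩ cyl σ) ∪ (cyl σ \ reductionSet f c) := by
    rintro G ⟨hGσ, hG⟩
    by_cases hGc : G ∈ reductionSet f c
    · refine Or.inl ⟨?_, hGσ⟩
      have h := (c.approxSet_subset n m N hG).symm.trans (hGc n)
      rw [Part.some_inj] at h
      cases hGm : G m <;> cases hGf : G (f n) <;> simp_all
    · exact Or.inr ⟨hGσ, hGc⟩
  have hhalf : 2 * μ.real ({G | G m = G (f n)} ∩ cyl σ) ≤ μ.real (cyl σ) := by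
    have h := ENNReal.toReal_mono (measure_ne_top _ _) (two_mul_measure_inter_cyl_le hμ hm hfn)
    rwa [ENNReal.toReal_mul, ENNReal.toReal_ofNat] at h
  have hcyl : 0 ≤ μ.real (cyl σ) := measureReal_nonneg
  linarith [(measureReal_mono hsub).trans (measureReal_union_le (μ := μ) _ _)]

end Estimates

/-- if `{G : F(G) ≤_T G}` has positive uniform measure, then the
permutation `f` is computable. -/
theorem computable_of_pullback_reducible (f : Equiv.Perm ℕ)
    (μ : Measure (ℕ → Bool)) (hμ : IsBernoulli 2⁻¹ μ)
    (hpos : 0 < μ {G | TLe (pullback (⇑f) G) G}) :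
    Computable (⇑f) := by
  obtain ⟨c, hc⟩ : ∃ c, μ (reductionSet f c) ≠ 0 := by
    by_contra! h
    rw [setOf_TLe_pullback_eq_iUnion, measure_iUnion_null h] at hpos
    exact hpos.false
  obtain ⟨σ, hσ⟩ := exists_cyl_measureReal_sdiff_le hμ (measurableSet_reductionSet f c) hc
    (ε := 7⁻¹) (by norm_num)
  obtain ⟨g, hg, hgf⟩ := exists_partrec_mem_of_certified (c.primrecPred_certifies σ)
  refine Computable.of_mem_partrec_off_finset hg ((Finset.range σ.length).image f.symm)
    fun n hn => hgf n (f n) ?_ ?_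
  · obtain ⟨N, hN, hlt⟩ := ((eventually_ge_atTop σ.length).and
      (eventually_lt_measureReal_approxSet hμ hσ n)).exists
    exact ⟨N, (OCode.certifies_iff hμ).2 ⟨hN, hlt⟩⟩
  · intro m N hcert
    obtain ⟨-, hlt⟩ := (OCode.certifies_iff hμ).1 hcert
    have hfn : σ.length ≤ f n := by
      by_contra! h
      exact hn (Finset.mem_image.2 ⟨f n, Finset.mem_range.2 h, f.symm_apply_apply n⟩)
    by_contra hm
    linarith [measureReal_approxSet_le hμ hσ hfn hm N]
end
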